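/- arXiv:2106.04023 — 8 statements merged into one kernel-verified Lean document; each statement's English description precedes it below -/
import Mathlib

section
/- Let S be a nonempty finite set, and for each s ∈ S let K^s ⊆ ℝ^n × ℝ^m be a nonempty compact set and q^s ∈ ℝ^m, let p_s ≥ 0 for each s ∈ S, and let c ∈ ℝ^n. Assume there exists x ∈ ℝ^n such that for every s ∈ S there is y^s with (x, y^s) ∈ convexHull(K^s). Then the infimum of c·x + Σ_{s∈S} p_s θ_s over all (x, (θ_s)_{s∈S}) ∈ ℝ^n × ℝ^S satisfying every Lagrangian cut, i.e. satisfying π·x + π₀ θ_s ≥ inf{π·x' + π₀ (q^s·y') : (x',y') ∈ K^s} for every s ∈ S and every (π, π₀) ∈ ℝ^n × ℝ with π₀ ≥ 0, is equal to the infimum of c·x + Σ_{s∈S} p_s (q^s·y^s) over all (x, (y^s)_{s∈S}) such that (x, y^s) ∈ convexHull(K^s) for every s ∈ S. -/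
/-!
Project `conv K` to `(x, q ⬝ᵥ y)` and add the upward ray in the cost coordinate. Since the convex
hull of a compact set is compact in finite dimension, the result is closed and convex. A point
`(x, θ)` outside it is strictly separated by a functional that must be nonnegative on the ray
direction, i.e. by a Lagrangian cut with `π₀ ≥ 0`, which `(x, θ)` then violates. So the points
satisfying all Lagrangian cuts are exactly those dominated by the convexified primal, and the two
infima coincide.
-/

open Set Pointwise Matrix

section ConvexHull

variable {𝕜 E : Type*}

theorem exists_fin_convex_combination_of_card_le [Semiring 𝕜] [PartialOrder 𝕜]
    [AddCommMonoid E] [Module 𝕜 E] {ι : Type*} [Fintype ι] {s : Set E} {a : E} (ha : a ∈ s)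
    {w : ι → 𝕜} (hw : w ∈ stdSimplex 𝕜 ι) {z : ι → E} (hz : ∀ i, z i ∈ s) {N : ℕ}
    (hN : Fintype.card ι ≤ N) :
    ∃ w' ∈ stdSimplex 𝕜 (Fin N), ∃ z' : Fin N → E, (∀ j, z' j ∈ s) ∧
      ∑ j, w' j • z' j = ∑ i, w i • z i := by
  let e : ι ⊕ Fin (N - Fintype.card ι) ≃ Fin N :=
    Fintype.equivFinOfCardEq (by simp only [Fintype.card_sum, Fintype.card_fin]; omega)
  refine ⟨Sum.elim w 0 ∘ e.symm, ⟨fun j => ?_, ?_⟩, Sum.elim z (fun _ => a) ∘ e.symm,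
    fun j => ?_, ?_⟩
  · exact (Sum.forall (p := fun k => 0 ≤ Sum.elim w 0 k)).2 ⟨hw.1, fun _ => le_rfl⟩ _
  · simpa [e.symm.sum_comp (Sum.elim w 0), Fintype.sum_sum_type] using hw.2
  · exact (Sum.forall (p := fun k => Sum.elim z (fun _ => a) k ∈ s)).2 ⟨hz, fun _ => ha⟩ _
  · simp [e.symm.sum_comp (fun k => Sum.elim w 0 k • Sum.elim z (fun _ => a) k),
      Fintype.sum_sum_type]

variable [NormedAddCommGroup E] [NormedSpace ℝ E] [FiniteDimensional ℝ E]

theorem convexHull_eq_image_stdSimplex {s : Set E} (hs : s.Nonempty) :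
    convexHull ℝ s =
      (fun wz : (Fin (Module.finrank ℝ E + 1) → ℝ) × (Fin (Module.finrank ℝ E + 1) → E) =>
        ∑ i, wz.1 i • wz.2 i) '' (stdSimplex ℝ _ ×ˢ univ.pi fun _ => s) := by
  refine Subset.antisymm (fun x hx => ?_) ?_
  · -- Carathéodory: an affinely independent family has at most `finrank + 1` points.
    obtain ⟨ι, _, z, w, hzs, hind, hwpos, hw1, rfl⟩ := eq_pos_convex_span_of_mem_convexHull hx
    have hcard : Fintype.card ι ≤ Module.finrank ℝ E + 1 :=
      hind.card_le_finrank_succ.trans (Nat.add_le_add_right (Submodule.finrank_le _) 1)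
    obtain ⟨w', hw', z', hz', hsum⟩ := exists_fin_convex_combination_of_card_le hs.some_mem
      ⟨fun i => (hwpos i).le, hw1⟩ (fun i => hzs ⟨i, rfl⟩) hcard
    exact ⟨(w', z'), ⟨hw', fun j _ => hz' j⟩, hsum⟩
  · rintro _ ⟨⟨w, z⟩, ⟨hw, hz⟩, rfl⟩
    exact (convex_convexHull ℝ s).sum_mem (fun i _ => hw.1 i) hw.2
      (fun i _ => subset_convexHull ℝ s (hz i (mem_univ i)))

theorem IsCompact.convexHull {s : Set E} (hs : IsCompact s) : IsCompact (convexHull ℝ s) := by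
  rcases s.eq_empty_or_nonempty with rfl | hne
  · simp
  rw [convexHull_eq_image_stdSimplex hne]
  exact ((isCompact_stdSimplex ℝ _).prod (isCompact_univ_pi fun _ => hs)).image (by fun_prop)

theorem exists_le_and_mem_convexHull_of_forall_sInf_le {C : Set (E × ℝ)} (hne : C.Nonempty)
    (hC : IsCompact C) {x : E} {θ : ℝ}
    (h : ∀ f : E × ℝ →ₗ[ℝ] ℝ, 0 ≤ f (0, 1) → sInf (f '' C) ≤ f (x, θ)) :
    ∃ t ≤ θ, (x, t) ∈ convexHull ℝ C := by
  have hD : (x, θ) ∈ convexHull ℝ C + ({0} ×ˢ Ici 0 : Set (E × ℝ)) := by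
    by_contra hxD
    obtain ⟨f, u, hfx, hfD⟩ := geometric_hahn_banach_point_closed
      ((convex_convexHull ℝ C).add ((convex_singleton 0).prod (convex_Ici 0)))
      ((isClosed_singleton.prod isClosed_Ici).add_left_of_isCompact hC.convexHull) hxD
    have hray : ∀ c ∈ C, ∀ r : ℝ, 0 ≤ r → u < f c + r * f (0, 1) := fun c hc r hr => by
      have hcr := hfD _ (add_mem_add (subset_convexHull ℝ C hc)
        (show ((0 : E), r) ∈ ({0} ×ˢ Ici 0 : Set (E × ℝ)) from ⟨rfl, hr⟩))
      rwa [← smul_eq_mul, ← map_smul, ← map_add, Prod.smul_mk, smul_zero, smul_eq_mul, mul_one]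
    have hu : u ≤ sInf (f '' C) := le_csInf (hne.image f) <| forall_mem_image.2 fun c hc =>
      by simpa using (hray c hc 0 le_rfl).le
    obtain ⟨c, hc⟩ := hne
    -- `f` stays above `u` on the ray `c + r • (0, 1)`, `r ≥ 0`, so it cannot decrease along it.
    have hf01 : 0 ≤ f (0, 1) := by
      by_contra! hneg
      have hcu := hray c hc 0 le_rfl
      have hr := hray c hc ((f c - u) / -f (0, 1)) (div_nonneg (by linarith) (by linarith))
      rw [div_mul_eq_mul_div, div_neg, mul_div_cancel_right₀ _ hneg.ne] at hr
      linarith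
    have hcut := h f hf01
    rw [ContinuousLinearMap.coe_coe] at hcut
    linarith
  obtain ⟨c, hc, ⟨_, r⟩, ⟨rfl, hr⟩, hsum⟩ := hD
  obtain ⟨hx, hθ⟩ := Prod.ext_iff.1 hsum
  simp only [Prod.fst_add, Prod.snd_add, add_zero] at hx hθ
  refine ⟨θ - r, by linarith [mem_Ici.1 hr], ?_⟩
  convert hc using 1
  ext <;> simp [← hx, ← hθ]

end ConvexHull

theorem apply_eq_dotProduct_add_mul {ι : Type*} [Fintype ι] [DecidableEq ι]
    (f : (ι → ℝ) × ℝ →ₗ[ℝ] ℝ) (v : ι → ℝ) (t : ℝ) :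
    f (v, t) = (dotProductEquiv ℝ ι).symm (f ∘ₗ LinearMap.inl ℝ _ ℝ) ⬝ᵥ v + f (0, 1) * t := by
  have hsplit : f (v, t) = f (v, 0) + t * f (0, 1) := by
    rw [← smul_eq_mul, ← map_smul, ← map_add]
    simp
  rw [hsplit, mul_comm t]
  congr 1
  exact (LinearMap.congr_fun
    ((dotProductEquiv ℝ ι).apply_symm_apply (f ∘ₗ LinearMap.inl ℝ _ ℝ)) v).symm

section Lagrangian

variable {n m : ℕ}

/-- The scenario value function `Q̄*(π, π₀)`. -/
noncomputable def scenarioValue (K : Set ((Fin n → ℝ) × (Fin m → ℝ))) (q : Fin m → ℝ)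
    (π : Fin n → ℝ) (π₀ : ℝ) : ℝ :=
  sInf {r : ℝ | ∃ w ∈ K, r = (∑ i, π i * w.1 i) + π₀ * (∑ j, q j * w.2 j)}

def SatisfiesLagrangianCuts (K : Set ((Fin n → ℝ) × (Fin m → ℝ))) (q : Fin m → ℝ)
    (x : Fin n → ℝ) (θ : ℝ) : Prop :=
  ∀ (π : Fin n → ℝ) (π₀ : ℝ), 0 ≤ π₀ → π ⬝ᵥ x + π₀ * θ ≥ scenarioValue K q π π₀

noncomputable def lagrangianObjective (π : Fin n → ℝ) (π₀ : ℝ) (q : Fin m → ℝ) :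
    (Fin n → ℝ) × (Fin m → ℝ) →ₗ[ℝ] ℝ :=
  (dotProductBilin ℝ ℝ π).coprod (π₀ • dotProductBilin ℝ ℝ q)

noncomputable def costProjection (q : Fin m → ℝ) :
    (Fin n → ℝ) × (Fin m → ℝ) →ₗ[ℝ] (Fin n → ℝ) × ℝ :=
  LinearMap.id.prodMap (dotProductBilin ℝ ℝ q)

theorem lagrangianObjective_apply (π : Fin n → ℝ) (π₀ : ℝ) (q : Fin m → ℝ)
    (w : (Fin n → ℝ) × (Fin m → ℝ)) :
    lagrangianObjective π π₀ q w = π ⬝ᵥ w.1 + π₀ * (q ⬝ᵥ w.2) := by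
  simp [lagrangianObjective]

theorem costProjection_apply (q : Fin m → ℝ) (w : (Fin n → ℝ) × (Fin m → ℝ)) :
    costProjection q w = (w.1, q ⬝ᵥ w.2) :=
  rfl

theorem scenarioValue_eq_sInf_image (K : Set ((Fin n → ℝ) × (Fin m → ℝ))) (q : Fin m → ℝ)
    (π : Fin n → ℝ) (π₀ : ℝ) :
    scenarioValue K q π π₀ = sInf (lagrangianObjective π π₀ q '' K) := by
  simp only [scenarioValue, lagrangianObjective_apply, dotProduct, image, eq_comm]

variable {K : Set ((Fin n → ℝ) × (Fin m → ℝ))} {q : Fin m → ℝ} {x : Fin n → ℝ} {θ : ℝ}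

theorem satisfiesLagrangianCuts_of_mem_convexHull (hK : IsCompact K) {y : Fin m → ℝ}
    (hxy : (x, y) ∈ convexHull ℝ K) (hθ : q ⬝ᵥ y ≤ θ) : SatisfiesLagrangianCuts K q x θ := by
  intro π π₀ hπ₀
  set ℓ := lagrangianObjective π π₀ q
  obtain ⟨w, hw, hwle⟩ := (ℓ.concaveOn (convex_convexHull ℝ K)).exists_le_of_mem_convexHull
    (subset_convexHull ℝ K) hxy
  calc scenarioValue K q π π₀ = sInf (ℓ '' K) := scenarioValue_eq_sInf_image K q π π₀
    _ ≤ ℓ w :=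
      csInf_le (hK.image ℓ.continuous_of_finiteDimensional).bddBelow (mem_image_of_mem ℓ hw)
    _ ≤ ℓ (x, y) := hwle
    _ ≤ π ⬝ᵥ x + π₀ * θ := by rw [lagrangianObjective_apply]; gcongr

theorem exists_mem_convexHull_of_satisfiesLagrangianCuts (hne : K.Nonempty) (hK : IsCompact K)
    (h : SatisfiesLagrangianCuts K q x θ) : ∃ y, (x, y) ∈ convexHull ℝ K ∧ q ⬝ᵥ y ≤ θ := by
  obtain ⟨t, ht, hxt⟩ := exists_le_and_mem_convexHull_of_forall_sInf_le
    (hne.image (costProjection q)) (hK.image (costProjection q).continuous_of_finiteDimensional)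
    fun f hf => by
      have hcut := h ((dotProductEquiv ℝ (Fin n)).symm (f ∘ₗ LinearMap.inl ℝ _ ℝ)) _ hf
      rw [scenarioValue_eq_sInf_image, ← apply_eq_dotProduct_add_mul] at hcut
      convert hcut using 2
      rw [image_image]
      congr 1
      funext w
      rw [costProjection_apply, lagrangianObjective_apply, apply_eq_dotProduct_add_mul]
  rw [← LinearMap.image_convexHull] at hxt
  obtain ⟨w, hw, hwxt⟩ := hxt
  obtain ⟨rfl, rfl⟩ := Prod.ext_iff.1 hwxt
  exact ⟨w.2, hw, ht⟩

theorem satisfiesLagrangianCuts_iff (hne : K.Nonempty) (hK : IsCompact K) :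
    SatisfiesLagrangianCuts K q x θ ↔ ∃ y, (x, y) ∈ convexHull ℝ K ∧ q ⬝ᵥ y ≤ θ :=
  ⟨exists_mem_convexHull_of_satisfiesLagrangianCuts hne hK,
    fun ⟨_, hxy, hθ⟩ => satisfiesLagrangianCuts_of_mem_convexHull hK hxy hθ⟩

end Lagrangian

theorem stmt_0_general {n m : ℕ} {S : Type*} [Fintype S]
    (K : S → Set ((Fin n → ℝ) × (Fin m → ℝ)))
    (hKne : ∀ s, (K s).Nonempty) (hKcpt : ∀ s, IsCompact (K s))
    (q : S → Fin m → ℝ) (p : S → ℝ) (hp : ∀ s, 0 ≤ p s) (c : Fin n → ℝ) :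
    sInf {v : ℝ | ∃ (x : Fin n → ℝ) (θ : S → ℝ),
      (∀ s, ∀ π : Fin n → ℝ, ∀ π₀ : ℝ, 0 ≤ π₀ →
        (∑ i, π i * x i) + π₀ * θ s ≥
          sInf {r : ℝ | ∃ w ∈ K s, r = (∑ i, π i * w.1 i) + π₀ * (∑ j, q s j * w.2 j)}) ∧
      v = (∑ i, c i * x i) + ∑ s, p s * θ s} =
    sInf {v : ℝ | ∃ (x : Fin n → ℝ) (y : S → Fin m → ℝ),
      (∀ s, (x, y s) ∈ convexHull ℝ (K s)) ∧
      v = (∑ i, c i * x i) + ∑ s, p s * (∑ j, q s j * y s j)} := by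
  refine csInf_eq_csInf_of_forall_exists_le ?_ ?_
  · rintro _ ⟨x, θ, hcut, rfl⟩
    choose y hy hyθ using fun s => (satisfiesLagrangianCuts_iff (hKne s) (hKcpt s)).1 (hcut s)
    refine ⟨_, ⟨x, y, hy, rfl⟩, ?_⟩
    gcongr with s
    exacts [hp s, hyθ s]
  · rintro _ ⟨x, y, hy, rfl⟩
    exact ⟨_, ⟨x, fun s => q s ⬝ᵥ y s,
      fun s => (satisfiesLagrangianCuts_iff (hKne s) (hKcpt s)).2 ⟨y s, hy s, le_rfl⟩, rfl⟩, le_rfl⟩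

/-- Theorem 3.2 combined with the primal characterization of the Lagrangian dual bound:
the Benders relaxation with all Lagrangian cuts has value equal to the convexified primal. -/
theorem stmt_0 {n m : ℕ} {S : Type*} [Fintype S] [Nonempty S]
    (K : S → Set ((Fin n → ℝ) × (Fin m → ℝ)))
    (hKne : ∀ s, (K s).Nonempty) (hKcpt : ∀ s, IsCompact (K s))
    (q : S → Fin m → ℝ) (p : S → ℝ) (hp : ∀ s, 0 ≤ p s) (c : Fin n → ℝ)
    (hfeas : ∃ x : Fin n → ℝ, ∀ s, ∃ y : Fin m → ℝ, (x, y) ∈ convexHull ℝ (K s)) :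
    sInf {v : ℝ | ∃ (x : Fin n → ℝ) (θ : S → ℝ),
      (∀ s, ∀ π : Fin n → ℝ, ∀ π₀ : ℝ, 0 ≤ π₀ →
        (∑ i, π i * x i) + π₀ * θ s ≥
          sInf {r : ℝ | ∃ w ∈ K s, r = (∑ i, π i * w.1 i) + π₀ * (∑ j, q s j * w.2 j)}) ∧
      v = (∑ i, c i * x i) + ∑ s, p s * θ s} =
    sInf {v : ℝ | ∃ (x : Fin n → ℝ) (y : S → Fin m → ℝ),
      (∀ s, (x, y s) ∈ convexHull ℝ (K s)) ∧
      v = (∑ i, c i * x i) + ∑ s, p s * (∑ j, q s j * y s j)} :=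
  stmt_0_general K hKne hKcpt q p hp c
end

section
/- Let K ⊆ ℝ^n × ℝ^m be nonempty and compact and q ∈ ℝ^m, and define Q̄*(π,π₀) = inf{π·x + π₀ (q·y) : (x,y) ∈ K} for (π,π₀) ∈ ℝ^n × ℝ. Let Π ⊆ ℝ^n × ℝ be a neighborhood of the origin, and let Π* = Π ∩ (ℝ^n × ℝ≥0). Then the set {(x,θ) ∈ ℝ^n × ℝ : π·x + π₀θ ≥ Q̄*(π,π₀) for all (π,π₀) ∈ Π*} is equal to the set {(x,θ) ∈ ℝ^n × ℝ : π·x + π₀θ ≥ Q̄*(π,π₀) for all (π,π₀) ∈ ℝ^n × ℝ with π₀ ≥ 0}. -/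
/-!
Both the value function `Q̄*` and the left-hand side `π·x + π₀θ` of a cut are positively
homogeneous in `(π, π₀)`, so a cut is equivalent to each of its positive multiples, and
every coefficient vector has a positive multiple inside the neighborhood `Π` of the origin.
-/

open Filter Topology Matrix

theorem exists_pos_smul_mem_of_mem_nhds_zero {E : Type*} [AddCommGroup E] [Module ℝ E]
    [TopologicalSpace E] [ContinuousSMul ℝ E] {P : Set E} (hP : P ∈ 𝓝 0) (x : E) :
    ∃ c : ℝ, 0 < c ∧ c • x ∈ P := by
  have hlim : Tendsto (fun c : ℝ => c • x) (𝓝[>] 0) (𝓝 0) := by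
    have hcont : Continuous fun c : ℝ => c • x := by fun_prop
    exact (hcont.tendsto' 0 0 (zero_smul ℝ x)).mono_left nhdsWithin_le_nhds
  obtain ⟨c, hcP, hc⟩ := ((hlim.eventually hP).and self_mem_nhdsWithin).exists
  exact ⟨c, hc, hcP⟩

theorem forall_mem_inter_nhds_zero_iff {E : Type*} [AddCommGroup E] [Module ℝ E]
    [TopologicalSpace E] [ContinuousSMul ℝ E] {P C : Set E} (hP : P ∈ 𝓝 0)
    (hC : ∀ c : ℝ, 0 < c → ∀ x ∈ C, c • x ∈ C) {f g : E → ℝ}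
    (hf : ∀ c : ℝ, 0 < c → ∀ x, f (c • x) = c * f x)
    (hg : ∀ c : ℝ, 0 < c → ∀ x, g (c • x) = c * g x) :
    (∀ x ∈ P ∩ C, g x ≤ f x) ↔ ∀ x ∈ C, g x ≤ f x := by
  refine ⟨fun h x hx => ?_, fun h x hx => h x hx.2⟩
  obtain ⟨c, hc, hcx⟩ := exists_pos_smul_mem_of_mem_nhds_zero hP x
  have hscaled := h (c • x) ⟨hcx, hC c hc x hx⟩
  rw [hf c hc, hg c hc] at hscaled
  exact le_of_mul_le_mul_left hscaled hc

theorem sInf_setOf_exists_mul {α : Type*} (K : Set α) (g : α → ℝ) {c : ℝ} (hc : 0 ≤ c) :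
    sInf {r | ∃ w ∈ K, r = c * g w} = c * sInf {r | ∃ w ∈ K, r = g w} := by
  rw [← smul_eq_mul, ← Real.sInf_smul_of_nonneg hc]
  congr 1
  ext r
  simp only [Set.mem_smul_set, Set.mem_ofPred_eq, smul_eq_mul]
  constructor
  · rintro ⟨w, hw, rfl⟩
    exact ⟨_, ⟨w, hw, rfl⟩, rfl⟩
  · rintro ⟨_, ⟨w, hw, rfl⟩, rfl⟩
    exact ⟨w, hw, rfl⟩

/-- The scenario value function `Q̄*`. -/
noncomputable def lagrangianValue {n m : ℕ} (K : Set ((Fin n → ℝ) × (Fin m → ℝ)))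
    (q : Fin m → ℝ) (π : (Fin n → ℝ) × ℝ) : ℝ :=
  sInf {r | ∃ w ∈ K, r = π.1 ⬝ᵥ w.1 + π.2 * (q ⬝ᵥ w.2)}

theorem lagrangianValue_smul {n m : ℕ} (K : Set ((Fin n → ℝ) × (Fin m → ℝ)))
    (q : Fin m → ℝ) {c : ℝ} (hc : 0 ≤ c) (π : (Fin n → ℝ) × ℝ) :
    lagrangianValue K q (c • π) = c * lagrangianValue K q π := by
  rw [lagrangianValue, lagrangianValue, ← sInf_setOf_exists_mul K _ hc]
  simp only [Prod.smul_fst, Prod.smul_snd, smul_dotProduct, smul_eq_mul, mul_add, mul_assoc]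

theorem stmt_1_general {n m : ℕ} (K : Set ((Fin n → ℝ) × (Fin m → ℝ)))
    (q : Fin m → ℝ)
    (Pset : Set ((Fin n → ℝ) × ℝ)) (hP : Pset ∈ nhds (0 : (Fin n → ℝ) × ℝ)) :
    {xt : (Fin n → ℝ) × ℝ | ∀ π ∈ Pset ∩ {z : (Fin n → ℝ) × ℝ | 0 ≤ z.2},
        (∑ i, π.1 i * xt.1 i) + π.2 * xt.2 ≥
          sInf {r : ℝ | ∃ w ∈ K, r = (∑ i, π.1 i * w.1 i) + π.2 * (∑ j, q j * w.2 j)}} =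
    {xt : (Fin n → ℝ) × ℝ | ∀ (π : Fin n → ℝ) (π₀ : ℝ), 0 ≤ π₀ →
        (∑ i, π i * xt.1 i) + π₀ * xt.2 ≥
          sInf {r : ℝ | ∃ w ∈ K, r = (∑ i, π i * w.1 i) + π₀ * (∑ j, q j * w.2 j)}} := by
  ext xt
  have hcut := forall_mem_inter_nhds_zero_iff hP (C := {z | 0 ≤ z.2})
    (fun c hc z hz => mul_nonneg hc.le hz) (g := lagrangianValue K q)
    (f := fun π => π.1 ⬝ᵥ xt.1 + π.2 * xt.2)
    (fun c _ π => by simp only [Prod.smul_fst, Prod.smul_snd, smul_dotProduct, smul_eq_mul]; ring)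
    (fun c hc => lagrangianValue_smul K q hc.le)
  exact hcut.trans Prod.forall

/-- Proposition 3.1 in cut-family form: restricting Lagrangian cut coefficients to any
neighborhood of the origin (intersected with {π₀ ≥ 0}) defines the same relaxation
as allowing all coefficients. -/
theorem stmt_1 {n m : ℕ} (K : Set ((Fin n → ℝ) × (Fin m → ℝ)))
    (hKne : K.Nonempty) (hKcpt : IsCompact K) (q : Fin m → ℝ)
    (Pset : Set ((Fin n → ℝ) × ℝ)) (hP : Pset ∈ nhds (0 : (Fin n → ℝ) × ℝ)) :
    {xt : (Fin n → ℝ) × ℝ | ∀ π ∈ Pset ∩ {z : (Fin n → ℝ) × ℝ | 0 ≤ z.2},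
        (∑ i, π.1 i * xt.1 i) + π.2 * xt.2 ≥
          sInf {r : ℝ | ∃ w ∈ K, r = (∑ i, π.1 i * w.1 i) + π.2 * (∑ j, q j * w.2 j)}} =
    {xt : (Fin n → ℝ) × ℝ | ∀ (π : Fin n → ℝ) (π₀ : ℝ), 0 ≤ π₀ →
        (∑ i, π i * xt.1 i) + π₀ * xt.2 ≥
          sInf {r : ℝ | ∃ w ∈ K, r = (∑ i, π i * w.1 i) + π₀ * (∑ j, q j * w.2 j)}} :=
  stmt_1_general K q Pset hP
end

section
/- Let K ⊆ ℝ^n × ℝ^m be nonempty and bounded, q ∈ ℝ^m, and (x,θ) ∈ ℝ^n × ℝ. If π·x + π₀θ ≥ inf{π·x' + π₀ (q·y') : (x',y') ∈ K} for every π ∈ ℝ^n and every π₀ > 0, then π·x ≥ inf{π·x' : (x',y') ∈ K} for every π ∈ ℝ^n. -/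
open Set Filter Topology Bornology

/-! On a bounded set `K` the term `π₀ * (q ⬝ y)` is at most `π₀ * M` in absolute value, so the
value function at `π₀ > 0` lies within `π₀ * M` of its value at `π₀ = 0`; letting `π₀ → 0⁺` in
the cut inequality gives the cut with `π₀ = 0`. -/

theorem sub_mul_le_sInf_image_add_mul {α : Type*} {s : Set α} {f g : α → ℝ}
    (hf : BddBelow (f '' s)) {M t : ℝ} (hM : 0 ≤ M) (ht : 0 ≤ t) (hg : ∀ a ∈ s, |g a| ≤ M) :
    sInf (f '' s) - t * M ≤ sInf ((fun a ↦ f a + t * g a) '' s) := by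
  rcases s.eq_empty_or_nonempty with rfl | hs
  · simp only [image_empty, Real.sInf_empty]
    linarith [mul_nonneg ht hM]
  refine le_csInf (hs.image _) ?_
  rintro _ ⟨a, ha, rfl⟩
  have hfa : sInf (f '' s) ≤ f a := csInf_le hf (mem_image_of_mem f ha)
  have hga : -(t * M) ≤ t * g a := by
    rw [← mul_neg]; exact mul_le_mul_of_nonneg_left (neg_le_of_abs_le (hg a ha)) ht
  linarith

theorem sInf_image_le_of_forall_pos {α : Type*} {s : Set α} {f g : α → ℝ}
    (hf : BddBelow (f '' s)) (hg : IsBounded (g '' s)) {c θ : ℝ}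
    (h : ∀ t > 0, sInf ((fun a ↦ f a + t * g a) '' s) ≤ c + t * θ) :
    sInf (f '' s) ≤ c := by
  obtain ⟨M, hM⟩ := hg.exists_norm_le
  have hM0 : ∀ a ∈ s, |g a| ≤ max M 0 := fun a ha ↦
    (hM _ (mem_image_of_mem g ha)).trans (le_max_left _ _)
  have hlim : Tendsto (fun t ↦ sInf (f '' s) - t * (max M 0 + θ)) (𝓝[>] 0)
      (𝓝 (sInf (f '' s))) := by
    have : Continuous (fun t ↦ sInf (f '' s) - t * (max M 0 + θ)) := by fun_prop
    simpa using (this.tendsto 0).mono_left nhdsWithin_le_nhds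
  refine le_of_tendsto hlim (eventually_nhdsWithin_of_forall fun t (ht : 0 < t) ↦ ?_)
  have := sub_mul_le_sInf_image_add_mul hf (le_max_right M 0) ht.le hM0
  linarith [h t ht]

theorem Bornology.IsBounded.image_of_continuous {α β : Type*} [PseudoMetricSpace α]
    [ProperSpace α] [PseudoMetricSpace β] {s : Set α} (hs : IsBounded s) {f : α → β} (hf : Continuous f) :
    IsBounded (f '' s) :=
  (hs.isCompact_closure.image hf).isBounded.subset (image_mono subset_closure)

theorem setOf_exists_mem_eq_eq_image {α β : Type*} (s : Set α) (f : α → β) :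
    {r | ∃ a ∈ s, r = f a} = f '' s := by
  ext; simp [eq_comm]

theorem stmt_3_general {n m : ℕ} (K : Set ((Fin n → ℝ) × (Fin m → ℝ)))
    (hKbd : Bornology.IsBounded K) (q : Fin m → ℝ)
    (x : Fin n → ℝ) (θ : ℝ)
    (h : ∀ (π : Fin n → ℝ) (π₀ : ℝ), 0 < π₀ →
        (∑ i, π i * x i) + π₀ * θ ≥
          sInf {r : ℝ | ∃ w ∈ K, r = (∑ i, π i * w.1 i) + π₀ * (∑ j, q j * w.2 j)}) :
    ∀ π : Fin n → ℝ,
      (∑ i, π i * x i) ≥ sInf {r : ℝ | ∃ w ∈ K, r = ∑ i, π i * w.1 i} := by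
  intro π
  simp only [setOf_exists_mem_eq_eq_image] at h ⊢
  exact sInf_image_le_of_forall_pos (hKbd.image_of_continuous (by fun_prop)).bddBelow
    (hKbd.image_of_continuous (by fun_prop)) (h π)

/-- Cuts with π₀ = 0 are implied by cuts with π₀ > 0 when K is bounded
(lower semicontinuity of the value function at π₀ = 0). -/
theorem stmt_3 {n m : ℕ} (K : Set ((Fin n → ℝ) × (Fin m → ℝ)))
    (hKne : K.Nonempty) (hKbd : Bornology.IsBounded K) (q : Fin m → ℝ)
    (x : Fin n → ℝ) (θ : ℝ)
    (h : ∀ (π : Fin n → ℝ) (π₀ : ℝ), 0 < π₀ →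
        (∑ i, π i * x i) + π₀ * θ ≥
          sInf {r : ℝ | ∃ w ∈ K, r = (∑ i, π i * w.1 i) + π₀ * (∑ j, q j * w.2 j)}) :
    ∀ π : Fin n → ℝ,
      (∑ i, π i * x i) ≥ sInf {r : ℝ | ∃ w ∈ K, r = ∑ i, π i * w.1 i} :=
  stmt_3_general K hKbd q x θ h
end

section
/- Let Π ⊆ ℝ^n × ℝ be nonempty and compact, let E ⊆ ℝ^n × ℝ be nonempty and bounded, and define f(p) = inf{p·e : e ∈ E} for p ∈ ℝ^n × ℝ. Let δ ∈ [0,1), let w : ℕ → ℝ^n × ℝ be a sequence, and let π : ℕ → ℝ^n × ℝ be a sequence with π_t ∈ Π for all t, such that: (i) for every t, f(π_t) − π_t·w_t ≥ (1−δ) · sup{f(p) − p·w_t : p ∈ Π}; and (ii) for every t < t', f(π_t) − π_t·w_{t'} ≤ 0. Then every cluster point w̄ of the sequence (w_t) satisfies f(p) − p·w̄ ≤ 0 for all p ∈ Π, i.e. w̄ satisfies all Lagrangian cuts with coefficients in Π. -/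
/-!
Suppose some `p̄ ∈ Π` is violated at `w̄` by `ε > 0`. Because `Π` is compact, the pairings
`p · w` are equicontinuous in `w` uniformly over `p ∈ Π`, so for iterates `t < t'` with `w t`
and `w t'` close enough to `w̄`: the cut `π t` is nearly valid at `w t` (it is valid at `w t'` by
(ii)), while by (i) it is violated at `w t` by at least `(1 - δ)` times the violation of `p̄`,
which is close to `(1 - δ) ε`.
-/

open Filter Topology

theorem IsCompact.equicontinuousAt_of_continuous_uncurry {X Y α : Type*} [TopologicalSpace X]
    [TopologicalSpace Y] [PseudoMetricSpace α] {K : Set Y} (hK : IsCompact K) {F : Y → X → α}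
    (hF : Continuous (Function.uncurry F)) (x₀ : X) :
    EquicontinuousAt (fun y : K => F y) x₀ := by
  rw [Metric.equicontinuousAt_iff_right]
  intro ε hε
  have hnear : ∀ y₀ ∈ K, ∀ᶠ z : X × Y in 𝓝 (x₀, y₀), dist (F z.2 x₀) (F z.2 z.1) < ε := by
    intro y₀ _
    have hmoving : Continuous fun z : X × Y => F z.2 z.1 := hF.comp continuous_swap
    have hfixed : Continuous fun z : X × Y => F z.2 x₀ :=
      hF.comp (continuous_snd.prodMk continuous_const)
    filter_upwards [Metric.tendsto_nhds.1 hmoving.continuousAt _ (half_pos hε),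
      Metric.tendsto_nhds.1 hfixed.continuousAt _ (half_pos hε)] with z h₁ h₂
    calc dist (F z.2 x₀) (F z.2 z.1) ≤ dist (F z.2 x₀) (F y₀ x₀) + dist (F z.2 z.1) (F y₀ x₀) :=
          dist_triangle_right _ _ _
      _ < ε := by linarith
  exact (hK.eventually_forall_of_forall_eventually (P := fun x y => dist (F y x₀) (F y x) < ε)
    hnear).mono fun x hx y => hx y y.2

theorem cut_nonpos_of_mapClusterPt {ι V : Type*} [TopologicalSpace V] {c : ι → ℝ}
    {h : ι → V → ℝ} {w : ℕ → V} {π : ℕ → ι} {θ : ℝ} {wbar : V}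
    (hh : EquicontinuousAt h wbar) (hθ : 0 < θ)
    (hdeep : ∀ t i, θ * (c i - h i (w t)) ≤ c (π t) - h (π t) (w t))
    (hvalid : ∀ t t', t < t' → c (π t) - h (π t) (w t') ≤ 0)
    (hcluster : MapClusterPt wbar atTop w) (i : ι) :
    c i - h i wbar ≤ 0 := by
  by_contra! hε
  obtain ⟨η, hη, hηsmall⟩ := exists_pos_mul_lt (mul_pos hθ hε) (θ + 2)
  have hclose : ∃ᶠ t in atTop, ∀ j, |h j (w t) - h j wbar| < η := by
    refine hcluster.frequently (p := fun v => ∀ j, |h j v - h j wbar| < η)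
      ((Metric.equicontinuousAt_iff_right.1 hh η hη).mono ?_)
    intro v hv j
    rw [← Real.dist_eq, dist_comm]
    exact hv j
  obtain ⟨t, -, ht⟩ := frequently_atTop.1 hclose 0
  obtain ⟨t', htt', ht'⟩ := frequently_atTop.1 hclose (t + 1)
  have hvalid_t := hvalid t t' htt'
  have hdeep_t := hdeep t i
  have h₁ := mul_lt_mul_of_pos_left (abs_lt.1 (ht i)).2 hθ
  have h₂ := abs_lt.1 (ht (π t))
  have h₃ := abs_lt.1 (ht' (π t))
  -- θ (c i - h i w̄) < θ (c i - h i (w t)) + θ η ≤ c (π t) - h (π t) (w t) + θ η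
  --   < c (π t) - h (π t) (w t') + (θ + 2) η ≤ (θ + 2) η
  linarith

def pairing {n : ℕ} (p v : (Fin n → ℝ) × ℝ) : ℝ :=
  (∑ i, p.1 i * v.1 i) + p.2 * v.2

theorem continuous_pairing {n : ℕ} : Continuous (Function.uncurry (pairing (n := n))) := by
  unfold Function.uncurry pairing
  fun_prop

theorem sInf_pairing_le {n : ℕ} {E : Set ((Fin n → ℝ) × ℝ)} (hE : Bornology.IsBounded E)
    {e : (Fin n → ℝ) × ℝ} (he : e ∈ E) (p : (Fin n → ℝ) × ℝ) :
    sInf {r : ℝ | ∃ e ∈ E, r = pairing p e} ≤ pairing p e := by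
  have hcont : Continuous (pairing p) := continuous_pairing.comp (Continuous.prodMk_right p)
  refine csInf_le ((hE.isCompact_closure.bddBelow_image hcont.continuousOn).mono ?_) ⟨e, he, rfl⟩
  rintro _ ⟨e', he', rfl⟩
  exact ⟨e', subset_closure he', rfl⟩

theorem bddAbove_cutViolation {n : ℕ} {P : Set ((Fin n → ℝ) × ℝ)} (hP : IsCompact P)
    {f : (Fin n → ℝ) × ℝ → ℝ} {e : (Fin n → ℝ) × ℝ} (hf : ∀ p, f p ≤ pairing p e)
    (w : (Fin n → ℝ) × ℝ) :
    BddAbove {v : ℝ | ∃ p ∈ P, v = f p - pairing p w} := by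
  have hcont : Continuous fun p => pairing p e - pairing p w :=
    (continuous_pairing.comp (Continuous.prodMk_left e)).sub
      (continuous_pairing.comp (Continuous.prodMk_left w))
  obtain ⟨M, hM⟩ := hP.bddAbove_image hcont.continuousOn
  refine ⟨M, ?_⟩
  rintro _ ⟨p, hp, rfl⟩
  exact (sub_le_sub_right (hf p) _).trans (hM ⟨p, hp, rfl⟩)

theorem stmt_5_general {n : ℕ} (Pset : Set ((Fin n → ℝ) × ℝ))
    (hPcpt : IsCompact Pset)
    (E : Set ((Fin n → ℝ) × ℝ)) (hEne : E.Nonempty) (hEbd : Bornology.IsBounded E)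
    (f : (Fin n → ℝ) × ℝ → ℝ)
    (hf : ∀ p, f p = sInf {r : ℝ | ∃ e ∈ E, r = (∑ i, p.1 i * e.1 i) + p.2 * e.2})
    (δ : ℝ) (hδ1 : δ < 1)
    (w : ℕ → (Fin n → ℝ) × ℝ) (π : ℕ → (Fin n → ℝ) × ℝ) (hπ : ∀ t, π t ∈ Pset)
    (h1 : ∀ t, f (π t) - ((∑ i, (π t).1 i * (w t).1 i) + (π t).2 * (w t).2) ≥
        (1 - δ) *
          sSup {v : ℝ | ∃ p ∈ Pset, v = f p - ((∑ i, p.1 i * (w t).1 i) + p.2 * (w t).2)})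
    (h2 : ∀ t t', t < t' →
        f (π t) - ((∑ i, (π t).1 i * (w t').1 i) + (π t).2 * (w t').2) ≤ 0)
    (wbar : (Fin n → ℝ) × ℝ) (hcluster : MapClusterPt wbar Filter.atTop w) :
    ∀ p ∈ Pset, f p - ((∑ i, p.1 i * wbar.1 i) + p.2 * wbar.2) ≤ 0 := by
  obtain ⟨e, he⟩ := hEne
  have hfe : ∀ p, f p ≤ pairing p e := fun p => (hf p).trans_le (sInf_pairing_le hEbd he p)
  have hdeep : ∀ t (q : Pset), (1 - δ) * (f q - pairing q (w t)) ≤ f (π t) - pairing (π t) (w t) :=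
    fun t q => (mul_le_mul_of_nonneg_left
      (le_csSup (bddAbove_cutViolation hPcpt hfe (w t)) ⟨q, q.2, rfl⟩) (sub_nonneg.2 hδ1.le)).trans
      (h1 t)
  intro p hp
  exact cut_nonpos_of_mapClusterPt (c := fun q : Pset => f q) (w := w) (π := fun t => ⟨π t, hπ t⟩)
    (hPcpt.equicontinuousAt_of_continuous_uncurry continuous_pairing wbar)
    (sub_pos.2 hδ1) hdeep h2 hcluster ⟨p, hp⟩

/-- Theorem 4.2: convergence of the restricted Lagrangian cut generation scheme:
every cluster point of the iterates satisfies all cuts with coefficients in Π. -/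
theorem stmt_5 {n : ℕ} (Pset : Set ((Fin n → ℝ) × ℝ)) (hPne : Pset.Nonempty)
    (hPcpt : IsCompact Pset)
    (E : Set ((Fin n → ℝ) × ℝ)) (hEne : E.Nonempty) (hEbd : Bornology.IsBounded E)
    (f : (Fin n → ℝ) × ℝ → ℝ)
    (hf : ∀ p, f p = sInf {r : ℝ | ∃ e ∈ E, r = (∑ i, p.1 i * e.1 i) + p.2 * e.2})
    (δ : ℝ) (hδ0 : 0 ≤ δ) (hδ1 : δ < 1)
    (w : ℕ → (Fin n → ℝ) × ℝ) (π : ℕ → (Fin n → ℝ) × ℝ) (hπ : ∀ t, π t ∈ Pset)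
    (h1 : ∀ t, f (π t) - ((∑ i, (π t).1 i * (w t).1 i) + (π t).2 * (w t).2) ≥
        (1 - δ) *
          sSup {v : ℝ | ∃ p ∈ Pset, v = f p - ((∑ i, p.1 i * (w t).1 i) + p.2 * (w t).2)})
    (h2 : ∀ t t', t < t' →
        f (π t) - ((∑ i, (π t).1 i * (w t').1 i) + (π t).2 * (w t').2) ≤ 0)
    (wbar : (Fin n → ℝ) × ℝ) (hcluster : MapClusterPt wbar Filter.atTop w) :
    ∀ p ∈ Pset, f p - ((∑ i, p.1 i * wbar.1 i) + p.2 * wbar.2) ≤ 0 :=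
  stmt_5_general Pset hPcpt E hEne hEbd f hf δ hδ1 w π hπ h1 h2 wbar hcluster
end

section
/- Let S be a nonempty finite set, p : S → ℝ with p_s > 0 for all s and Σ_{s∈S} p_s = 1, c ∈ ℝ^n, and for each s ∈ S let K^s ⊆ ℝ^n × ℝ^m be a nonempty finite set and q^s ∈ ℝ^m. Assume there exists x ∈ ℝ^n such that for every s ∈ S there is y^s with (x, y^s) ∈ convexHull(K^s). Then the supremum over all λ : S → ℝ^n with Σ_{s∈S} p_s λ^s = 0 of Σ_{s∈S} p_s · min{(c + λ^s)·x' + q^s·y' : (x',y') ∈ K^s} equals the minimum of c·x + Σ_{s∈S} p_s (q^s·y^s) over all (x, (y^s)_{s∈S}) with (x, y^s) ∈ convexHull(K^s) for every s ∈ S. -/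
/-!
Weak duality: for multipliers with `∑ s, p s • λ s = 0` the multiplier terms cancel at any
nonanticipative point, and a linear function attains its minimum over `conv K^s` at a point of
`K^s`.

Strong duality: the image of `∏ s, conv K^s` under `z ↦ (p-weighted nonanticipativity residual,
expected cost)` is compact and convex, and for `t` below the primal value it misses
`{0} × (-∞, t]`. A strictly separating functional `f` has `f (0, 1) < 0` (test it on a feasible
point), so `f (·, 0) / f (0, 1)` is a Lagrange multiplier for the residual. Writing it as
`w ↦ ∑ s, γ s ⬝ᵥ w s`, the centred vectors `λ s = γ s - ∑ t, p t • γ t` average to zero and give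
a dual value above `t`.
-/

open Finset

theorem Convex.exists_forall_lt_add_of_isCompact {W V : Type*}
    [AddCommGroup W] [Module ℝ W] [TopologicalSpace W]
    [AddCommGroup V] [Module ℝ V] [TopologicalSpace V] [IsTopologicalAddGroup V]
    [ContinuousSMul ℝ V] [LocallyConvexSpace ℝ V] [T1Space V]
    {Z : Set W} (hZ : Convex ℝ Z) (hZc : IsCompact Z) (A : W →L[ℝ] V) (φ : W →L[ℝ] ℝ)
    {t : ℝ} (hfeas : ∃ z ∈ Z, A z = 0) (ht : ∀ z ∈ Z, A z = 0 → t < φ z) :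
    ∃ g : V →L[ℝ] ℝ, ∀ z ∈ Z, t < φ z + g (A z) := by
  obtain ⟨z₀, hz₀, hAz₀⟩ := hfeas
  have hdisj : Disjoint (A.prod φ '' Z) ({0} ×ˢ Set.Iic t) := by
    rw [Set.disjoint_left]
    rintro _ ⟨z, hz, rfl⟩ ⟨hAz, hφz⟩
    exact (ht z hz hAz).not_ge hφz
  obtain ⟨f, u, v, hfu, huv, hfv⟩ := geometric_hahn_banach_compact_closed
    (hZ.linear_image (A.prod φ).toLinearMap) (hZc.image (A.prod φ).continuous)
    ((convex_singleton 0).prod (convex_Iic t)) (isClosed_singleton.prod isClosed_Iic) hdisj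
  set μ := f (0, 1)
  have hf : ∀ a r, f (a, r) = f (a, 0) + r * μ := fun a r => by
    rw [← smul_eq_mul, ← map_smul, ← map_add, Prod.smul_mk, Prod.mk_add_mk]; simp
  have hlt : ∀ z ∈ Z, f (A z, 0) + φ z * μ < t * μ := fun z hz => by
    have h₁ := hfu _ ⟨z, hz, rfl⟩
    have h₂ := hfv (0, t) ⟨rfl, Set.mem_Iic.2 le_rfl⟩
    rw [ContinuousLinearMap.coe_coe, ContinuousLinearMap.prod_apply, hf] at h₁
    rw [hf, Prod.mk_zero_zero, map_zero, zero_add] at h₂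
    linarith
  have hμ : μ < 0 := by
    have h₀ := hlt z₀ hz₀
    rw [hAz₀, Prod.mk_zero_zero, map_zero, zero_add] at h₀
    exact neg_of_mul_neg_right (by linarith : (φ z₀ - t) * μ < 0)
      (sub_nonneg.2 (ht z₀ hz₀ hAz₀).le)
  refine ⟨μ⁻¹ • f.comp (ContinuousLinearMap.inl ℝ V ℝ), fun z hz => ?_⟩
  have key : t - φ z < f (A z, 0) / μ := by
    rw [lt_div_iff_of_neg hμ]
    linarith [hlt z hz]
  simp only [smul_apply, ContinuousLinearMap.comp_apply, ContinuousLinearMap.inl_apply,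
    smul_eq_mul, inv_mul_eq_div]
  linarith

theorem exists_sum_dotProduct_eq {S ι : Type*} [Fintype S] [Fintype ι]
    (g : (S → ι → ℝ) →ₗ[ℝ] ℝ) : ∃ γ : S → ι → ℝ, ∀ w, g w = ∑ s, γ s ⬝ᵥ w s := by
  classical
  refine ⟨fun s => (dotProductEquiv ℝ ι).symm (g ∘ₗ LinearMap.single ℝ (fun _ => ι → ℝ) s),
    fun w => ?_⟩
  conv_lhs => rw [← univ_sum_single w, map_sum]
  refine sum_congr rfl fun s _ => ?_
  rw [← dotProductEquiv_apply_apply, LinearEquiv.apply_symm_apply]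
  rfl

theorem sum_dotProduct_smul_sub_sum_smul {S ι : Type*} [Fintype S] [Fintype ι] (p : S → ℝ)
    (γ x : S → ι → ℝ) :
    ∑ s, γ s ⬝ᵥ (p s • (x s - ∑ t, p t • x t)) =
      ∑ s, p s * ((γ s - ∑ t, p t • γ t) ⬝ᵥ x s) := by
  simp only [dotProduct_smul, dotProduct_sub, sub_dotProduct, dotProduct_sum, sum_dotProduct,
    smul_dotProduct, smul_eq_mul, mul_sub, sum_sub_distrib, mul_sum]
  rw [sum_comm]
  simp only [mul_left_comm]

theorem sum_smul_sub_sum_smul {S E : Type*} [Fintype S] [AddCommGroup E] [Module ℝ E]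
    {p : S → ℝ} (hp : ∑ s, p s = 1) (x : S → E) :
    ∑ s, p s • (x s - ∑ t, p t • x t) = 0 := by
  simp [smul_sub, sum_sub_distrib, ← sum_smul, hp]

theorem sInf_le_of_mem_convexHull {E : Type*} [AddCommGroup E] [Module ℝ E] {K : Set E}
    (hK : K.Finite) (f : E →ₗ[ℝ] ℝ) {z : E} (hz : z ∈ convexHull ℝ K) :
    sInf {r | ∃ w ∈ K, r = f w} ≤ f z := by
  have himage : {r | ∃ w ∈ K, r = f w} = f '' K := by simp only [Set.image, eq_comm]
  rw [himage]
  exact convexHull_min (fun w hw => csInf_le (hK.image f).bddBelow ⟨w, hw, rfl⟩)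
    (convex_halfSpace_ge f.isLinear _) hz

theorem exists_mem_sInf_eq {E : Type*} {K : Set E} (hK : K.Finite) (hne : K.Nonempty)
    (f : E → ℝ) : ∃ w ∈ K, sInf {r | ∃ w ∈ K, r = f w} = f w := by
  obtain ⟨w, hw, hmin⟩ := Set.exists_min_image K f hK hne
  refine ⟨w, hw, IsLeast.csInf_eq ⟨⟨w, hw, rfl⟩, ?_⟩⟩
  rintro _ ⟨w', hw', rfl⟩
  exact hmin w' hw'

section StochasticProgram

variable {n m : ℕ} {S : Type*} [Fintype S]

def scenarioCost (a : Fin n → ℝ) (b : Fin m → ℝ) : ((Fin n → ℝ) × (Fin m → ℝ)) →ₗ[ℝ] ℝ :=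
  dotProductBilin ℝ ℝ a ∘ₗ LinearMap.fst ℝ _ _ + dotProductBilin ℝ ℝ b ∘ₗ LinearMap.snd ℝ _ _

theorem scenarioCost_apply (a : Fin n → ℝ) (b : Fin m → ℝ) (w : (Fin n → ℝ) × (Fin m → ℝ)) :
    scenarioCost a b w = a ⬝ᵥ w.1 + b ⬝ᵥ w.2 := rfl

variable (p : S → ℝ) (c : Fin n → ℝ) (K : S → Set ((Fin n → ℝ) × (Fin m → ℝ)))
  (q : S → Fin m → ℝ)

noncomputable def dualFunction (lam : S → Fin n → ℝ) : ℝ :=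
  ∑ s, p s * sInf {r | ∃ w ∈ K s, r = scenarioCost (c + lam s) (q s) w}

def expectedCost (x : Fin n → ℝ) (y : S → Fin m → ℝ) : ℝ :=
  c ⬝ᵥ x + ∑ s, p s * (q s ⬝ᵥ y s)

def relaxedCost : (S → (Fin n → ℝ) × (Fin m → ℝ)) →ₗ[ℝ] ℝ :=
  ∑ s, p s • (scenarioCost c (q s) ∘ₗ LinearMap.proj s)

-- Weighting by `p s` turns `∑ s, γ s ⬝ᵥ residual s` into the `p`-expectation of
-- `(γ s - ∑ t, p t • γ t) ⬝ᵥ (z s).1`, a multiplier that averages to zero.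
def nonanticipativityResidual : (S → (Fin n → ℝ) × (Fin m → ℝ)) →ₗ[ℝ] (S → Fin n → ℝ) :=
  LinearMap.pi fun s => p s • (LinearMap.fst ℝ _ _ ∘ₗ LinearMap.proj s -
    ∑ t, p t • (LinearMap.fst ℝ _ _ ∘ₗ LinearMap.proj t))

variable {p c K q}

theorem relaxedCost_apply (z : S → (Fin n → ℝ) × (Fin m → ℝ)) :
    relaxedCost p c q z = ∑ s, p s * scenarioCost c (q s) (z s) := by
  simp [relaxedCost]

theorem nonanticipativityResidual_apply (z : S → (Fin n → ℝ) × (Fin m → ℝ)) (s : S) :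
    nonanticipativityResidual p z s = p s • ((z s).1 - ∑ t, p t • (z t).1) := by
  simp [nonanticipativityResidual]

theorem nonanticipativityResidual_eq_zero_iff (hp : ∀ s, p s ≠ 0)
    {z : S → (Fin n → ℝ) × (Fin m → ℝ)} :
    nonanticipativityResidual p z = 0 ↔ ∀ s, (z s).1 = ∑ t, p t • (z t).1 := by
  simp [funext_iff, nonanticipativityResidual_apply, hp, sub_eq_zero]

theorem relaxedCost_eq_expectedCost (hpsum : ∑ s, p s = 1)
    {z : S → (Fin n → ℝ) × (Fin m → ℝ)} {x : Fin n → ℝ} (hz : ∀ s, (z s).1 = x) :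
    relaxedCost p c q z = expectedCost p c q x fun s => (z s).2 := by
  simp [relaxedCost_apply, expectedCost, scenarioCost_apply, hz, mul_add, sum_add_distrib,
    ← sum_mul, hpsum]

theorem relaxedCost_add_sum_dotProduct_residual (γ : S → Fin n → ℝ)
    (z : S → (Fin n → ℝ) × (Fin m → ℝ)) :
    relaxedCost p c q z + ∑ s, γ s ⬝ᵥ nonanticipativityResidual p z s =
      ∑ s, p s * scenarioCost (c + (γ s - ∑ t, p t • γ t)) (q s) (z s) := by
  simp only [nonanticipativityResidual_apply, sum_dotProduct_smul_sub_sum_smul, relaxedCost_apply,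
    ← sum_add_distrib, scenarioCost_apply, add_dotProduct]
  exact sum_congr rfl fun s _ => by ring

theorem dualFunction_le_expectedCost (hp : ∀ s, 0 ≤ p s) (hpsum : ∑ s, p s = 1)
    (hK : ∀ s, (K s).Finite) {lam : S → Fin n → ℝ} (hlam : ∑ s, p s • lam s = 0)
    {x : Fin n → ℝ} {y : S → Fin m → ℝ} (hxy : ∀ s, (x, y s) ∈ convexHull ℝ (K s)) :
    dualFunction p c K q lam ≤ expectedCost p c q x y :=
  calc dualFunction p c K q lam ≤ ∑ s, p s * scenarioCost (c + lam s) (q s) (x, y s) :=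
        sum_le_sum fun s _ =>
          mul_le_mul_of_nonneg_left (sInf_le_of_mem_convexHull (hK s) _ (hxy s)) (hp s)
    _ = expectedCost p c q x y := by
      have hlamx : ∑ s, p s * (lam s ⬝ᵥ x) = 0 := by
        simpa [sum_dotProduct, smul_dotProduct] using congrArg (· ⬝ᵥ x) hlam
      simp only [scenarioCost_apply, add_dotProduct, mul_add, sum_add_distrib, ← sum_mul, hpsum,
        hlamx, one_mul, add_zero, expectedCost]

theorem exists_lt_dualFunction (hp : ∀ s, 0 < p s) (hpsum : ∑ s, p s = 1)
    (hK : ∀ s, (K s).Finite) (hKne : ∀ s, (K s).Nonempty) {x₀ : Fin n → ℝ}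
    {y₀ : S → Fin m → ℝ} (hfeas : ∀ s, (x₀, y₀ s) ∈ convexHull ℝ (K s)) {t : ℝ}
    (ht : ∀ x y, (∀ s, (x, y s) ∈ convexHull ℝ (K s)) → t < expectedCost p c q x y) :
    ∃ lam : S → Fin n → ℝ, ∑ s, p s • lam s = 0 ∧ t < dualFunction p c K q lam := by
  have hp₀ s : p s ≠ 0 := (hp s).ne'
  obtain ⟨g, hg⟩ := Convex.exists_forall_lt_add_of_isCompact
    (convex_pi fun s _ => convex_convexHull ℝ (K s))
    (isCompact_univ_pi fun s => (hK s).isCompact_convexHull ℝ)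
    (nonanticipativityResidual p).toContinuousLinearMap (relaxedCost p c q).toContinuousLinearMap
    ⟨fun s => (x₀, y₀ s), fun s _ => hfeas s,
      (nonanticipativityResidual_eq_zero_iff hp₀).2 fun s => by simp [← sum_smul, hpsum]⟩
    (fun z hz hres => by
      rw [LinearMap.coe_toContinuousLinearMap', nonanticipativityResidual_eq_zero_iff hp₀] at hres
      rw [LinearMap.coe_toContinuousLinearMap', relaxedCost_eq_expectedCost hpsum hres]
      exact ht _ _ fun s => hres s ▸ hz s (Set.mem_univ s))
  obtain ⟨γ, hγ⟩ := exists_sum_dotProduct_eq g.toLinearMap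
  simp only [ContinuousLinearMap.coe_coe] at hγ
  refine ⟨fun s => γ s - ∑ t, p t • γ t, sum_smul_sub_sum_smul hpsum γ, ?_⟩
  choose w hwK hw using fun s =>
    exists_mem_sInf_eq (hK s) (hKne s) (scenarioCost (c + (γ s - ∑ t, p t • γ t)) (q s))
  calc t < relaxedCost p c q w + g (nonanticipativityResidual p w) := by
        simpa using hg w fun s _ => subset_convexHull ℝ _ (hwK s)
    _ = dualFunction p c K q _ := by
      rw [hγ, relaxedCost_add_sum_dotProduct_residual]
      simp only [dualFunction, hw]

end StochasticProgram

theorem stmt_6_general {n m : ℕ} {S : Type*} [Fintype S]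
    (p : S → ℝ) (hp : ∀ s, 0 < p s) (hpsum : ∑ s, p s = 1)
    (c : Fin n → ℝ)
    (K : S → Set ((Fin n → ℝ) × (Fin m → ℝ)))
    (hKfin : ∀ s, (K s).Finite) (hKne : ∀ s, (K s).Nonempty)
    (q : S → Fin m → ℝ)
    (hfeas : ∃ x : Fin n → ℝ, ∀ s, ∃ y : Fin m → ℝ, (x, y) ∈ convexHull ℝ (K s)) :
    sSup {v : ℝ | ∃ lam : S → Fin n → ℝ, (∑ s, p s • lam s) = 0 ∧
        v = ∑ s, p s * sInf {r : ℝ | ∃ w ∈ K s,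
            r = (∑ i, (c i + lam s i) * w.1 i) + ∑ j, q s j * w.2 j}} =
    sInf {v : ℝ | ∃ (x : Fin n → ℝ) (y : S → Fin m → ℝ),
        (∀ s, (x, y s) ∈ convexHull ℝ (K s)) ∧
        v = (∑ i, c i * x i) + ∑ s, p s * (∑ j, q s j * y s j)} := by
  obtain ⟨x₀, hx₀⟩ := hfeas
  choose y₀ hy₀ using hx₀
  have weak : ∀ lam, ∑ s, p s • lam s = 0 → ∀ x y, (∀ s, (x, y s) ∈ convexHull ℝ (K s)) →
      dualFunction p c K q lam ≤ expectedCost p c q x y := fun _ hlam _ _ hxy =>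
    dualFunction_le_expectedCost (fun s => (hp s).le) hpsum hKfin hlam hxy
  refine csSup_eq_of_forall_le_of_forall_lt_exists_gt ⟨_, 0, by simp, rfl⟩ ?_ fun t ht => ?_
  · rintro _ ⟨lam, hlam, rfl⟩
    exact le_csInf ⟨_, x₀, y₀, hy₀, rfl⟩ fun _ ⟨x, y, hxy, h⟩ => h ▸ weak lam hlam x y hxy
  · obtain ⟨lam, hlam, hlt⟩ := exists_lt_dualFunction hp hpsum hKfin hKne hy₀
      fun x y hxy => ht.trans_le <| csInf_le ⟨dualFunction p c K q 0, fun _ ⟨x, y, hxy, h⟩ =>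
        h ▸ weak 0 (by simp) x y hxy⟩ ⟨x, y, hxy, rfl⟩
    exact ⟨_, ⟨lam, hlam, rfl⟩, hlt⟩

/-- Theorem 2.1 (Carøe and Schultz): the nonanticipative Lagrangian dual bound equals
the optimal value of the convexified primal problem, for finite scenario feasible sets. -/
theorem stmt_6 {n m : ℕ} {S : Type*} [Fintype S] [Nonempty S]
    (p : S → ℝ) (hp : ∀ s, 0 < p s) (hpsum : ∑ s, p s = 1)
    (c : Fin n → ℝ)
    (K : S → Set ((Fin n → ℝ) × (Fin m → ℝ)))
    (hKfin : ∀ s, (K s).Finite) (hKne : ∀ s, (K s).Nonempty)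
    (q : S → Fin m → ℝ)
    (hfeas : ∃ x : Fin n → ℝ, ∀ s, ∃ y : Fin m → ℝ, (x, y) ∈ convexHull ℝ (K s)) :
    sSup {v : ℝ | ∃ lam : S → Fin n → ℝ, (∑ s, p s • lam s) = 0 ∧
        v = ∑ s, p s * sInf {r : ℝ | ∃ w ∈ K s,
            r = (∑ i, (c i + lam s i) * w.1 i) + ∑ j, q s j * w.2 j}} =
    sInf {v : ℝ | ∃ (x : Fin n → ℝ) (y : S → Fin m → ℝ),
        (∀ s, (x, y s) ∈ convexHull ℝ (K s)) ∧
        v = (∑ i, c i * x i) + ∑ s, p s * (∑ j, q s j * y s j)} :=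
  stmt_6_general p hp hpsum c K hKfin hKne q hfeas
end

section
/- Let K ⊆ ℝ^n × ℝ^m be nonempty, q ∈ ℝ^m, and λ ∈ ℝ^n, and let (x̄,ȳ) ∈ K satisfy λ·x̄ + q·ȳ ≤ λ·x' + q·y' for all (x',y') ∈ K. Then for every (x,y) ∈ K and every θ ∈ ℝ with θ ≥ q·y, the Lagrangian optimality cut λ·(x − x̄) + θ ≥ q·ȳ holds. -/
theorem stmt_9_general {n m : ℕ} (K : Set ((Fin n → ℝ) × (Fin m → ℝ)))
    (q : Fin m → ℝ) (lam : Fin n → ℝ)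
    (xb : (Fin n → ℝ) × (Fin m → ℝ))
    (hmin : ∀ w ∈ K, (∑ i, lam i * xb.1 i) + (∑ j, q j * xb.2 j) ≤
        (∑ i, lam i * w.1 i) + (∑ j, q j * w.2 j)) :
    ∀ w ∈ K, ∀ θ : ℝ, θ ≥ ∑ j, q j * w.2 j →
      (∑ i, lam i * (w.1 i - xb.1 i)) + θ ≥ ∑ j, q j * xb.2 j := by
  intro w hw θ hθ
  simp only [mul_sub, Finset.sum_sub_distrib]
  linarith [hmin w hw]

/-- Validity of the Lagrangian optimality cut (inequality (3)). -/
theorem stmt_9 {n m : ℕ} (K : Set ((Fin n → ℝ) × (Fin m → ℝ))) (hKne : K.Nonempty)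
    (q : Fin m → ℝ) (lam : Fin n → ℝ)
    (xb : (Fin n → ℝ) × (Fin m → ℝ)) (hxb : xb ∈ K)
    (hmin : ∀ w ∈ K, (∑ i, lam i * xb.1 i) + (∑ j, q j * xb.2 j) ≤
        (∑ i, lam i * w.1 i) + (∑ j, q j * w.2 j)) :
    ∀ w ∈ K, ∀ θ : ℝ, θ ≥ ∑ j, q j * w.2 j →
      (∑ i, lam i * (w.1 i - xb.1 i)) + θ ≥ ∑ j, q j * xb.2 j :=
  stmt_9_general K q lam xb hmin
end

section
/- Let X ⊆ ℝ^n and Y ⊆ ℝ^{n_y} be sets, A an k × n real matrix, b ∈ ℝ^k, T an l × n real matrix, W an l × n_y real matrix, h ∈ ℝ^l, and λ ∈ ℝ^n. Let F = {(x,y,u,v) : x ∈ X, y ∈ Y, u ∈ ℝ^k, v ∈ ℝ^l, u ≥ 0, v ≥ 0, Ax + u ≥ b, Tx + Wy + v ≥ h} (inequalities componentwise), and let (x̂,ŷ,û,v̂) ∈ F satisfy 𝟙·v̂ + 𝟙·û + λ·x̂ ≤ 𝟙·v + 𝟙·u + λ·x for every (x,y,u,v) ∈ F. Then for every (x,y)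 with x ∈ X, y ∈ Y, Ax ≥ b and Tx + Wy ≥ h, the Lagrangian feasibility cut λ·(x − x̂) ≥ 𝟙·v̂ + 𝟙·û holds. -/
theorem stmt_10_general {n ny k l : ℕ} (X : Set (Fin n → ℝ)) (Y : Set (Fin ny → ℝ))
    (A : Matrix (Fin k) (Fin n) ℝ) (b : Fin k → ℝ)
    (T : Matrix (Fin l) (Fin n) ℝ) (W : Matrix (Fin l) (Fin ny) ℝ) (h : Fin l → ℝ)
    (lam : Fin n → ℝ)
    (xh : Fin n → ℝ) (uh : Fin k → ℝ) (vh : Fin l → ℝ)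
    (hmin : ∀ (x : Fin n → ℝ) (y : Fin ny → ℝ) (u : Fin k → ℝ) (v : Fin l → ℝ),
      x ∈ X → y ∈ Y → (∀ i, 0 ≤ u i) → (∀ i, 0 ≤ v i) →
      (∀ i, A.mulVec x i + u i ≥ b i) →
      (∀ i, T.mulVec x i + W.mulVec y i + v i ≥ h i) →
      (∑ i, vh i) + (∑ i, uh i) + (∑ i, lam i * xh i) ≤
        (∑ i, v i) + (∑ i, u i) + (∑ i, lam i * x i)) :
    ∀ (x : Fin n → ℝ) (y : Fin ny → ℝ), x ∈ X → y ∈ Y →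
      (∀ i, A.mulVec x i ≥ b i) → (∀ i, T.mulVec x i + W.mulVec y i ≥ h i) →
      (∑ i, lam i * (x i - xh i)) ≥ (∑ i, vh i) + ∑ i, uh i := by
  intro x y hx hy hA hT
  have hzero_slack := hmin x y 0 0 hx hy (fun _ => le_rfl) (fun _ => le_rfl)
    (by simpa using hA) (by simpa using hT)
  simp only [Pi.zero_apply, Finset.sum_const_zero, zero_add] at hzero_slack
  simp only [mul_sub, Finset.sum_sub_distrib]
  linarith

/-- Validity of the Lagrangian feasibility cut (inequality (4)). -/
theorem stmt_10 {n ny k l : ℕ} (X : Set (Fin n → ℝ)) (Y : Set (Fin ny → ℝ))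
    (A : Matrix (Fin k) (Fin n) ℝ) (b : Fin k → ℝ)
    (T : Matrix (Fin l) (Fin n) ℝ) (W : Matrix (Fin l) (Fin ny) ℝ) (h : Fin l → ℝ)
    (lam : Fin n → ℝ)
    (xh : Fin n → ℝ) (yh : Fin ny → ℝ) (uh : Fin k → ℝ) (vh : Fin l → ℝ)
    (hxh : xh ∈ X) (hyh : yh ∈ Y) (huh : ∀ i, 0 ≤ uh i) (hvh : ∀ i, 0 ≤ vh i)
    (hAh : ∀ i, A.mulVec xh i + uh i ≥ b i)
    (hTh : ∀ i, T.mulVec xh i + W.mulVec yh i + vh i ≥ h i)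
    (hmin : ∀ (x : Fin n → ℝ) (y : Fin ny → ℝ) (u : Fin k → ℝ) (v : Fin l → ℝ),
      x ∈ X → y ∈ Y → (∀ i, 0 ≤ u i) → (∀ i, 0 ≤ v i) →
      (∀ i, A.mulVec x i + u i ≥ b i) →
      (∀ i, T.mulVec x i + W.mulVec y i + v i ≥ h i) →
      (∑ i, vh i) + (∑ i, uh i) + (∑ i, lam i * xh i) ≤
        (∑ i, v i) + (∑ i, u i) + (∑ i, lam i * x i)) :
    ∀ (x : Fin n → ℝ) (y : Fin ny → ℝ), x ∈ X → y ∈ Y →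
      (∀ i, A.mulVec x i ≥ b i) → (∀ i, T.mulVec x i + W.mulVec y i ≥ h i) →
      (∑ i, lam i * (x i - xh i)) ≥ (∑ i, vh i) + ∑ i, uh i :=
  stmt_10_general X Y A b T W h lam xh uh vh hmin
end

section
/- Let n ∈ ℕ, let Q : (Fin n → ℝ) → ℝ, and let L ∈ ℝ satisfy Q(z) ≥ L for every z : Fin n → ℝ with z_i ∈ {0,1} for all i. Let x̂ and x be points of {0,1}^n (i.e. x̂_i, x_i ∈ {0,1} for all i), and let θ ∈ ℝ with θ ≥ Q(x). Then θ ≥ Q(x̂) − (Q(x̂) − L) · ( Σ_{i : x̂_i = 1} (1 − x_i) + Σ_{i : x̂_i = 0} x_i ). -/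
/-!
For binary vectors the cut's coefficient `∑_{x̂ᵢ = 1} (1 - xᵢ) + ∑_{x̂ᵢ = 0} xᵢ` is the Hamming
distance between `x` and `x̂`, a natural number. At distance `0` we have `x = x̂` and the cut reads
`θ ≥ Q x̂`; at distance `k ≥ 1` its right-hand side is at most `Q x̂ - (Q x̂ - L) = L ≤ Q x ≤ θ`.
-/

open Finset

theorem sum_filter_one_sub_add_sum_filter_eq_hammingDist {ι : Type*} [Fintype ι]
    {xh x : ι → ℝ} (hxh : ∀ i, xh i = 0 ∨ xh i = 1) (hx : ∀ i, x i = 0 ∨ x i = 1) :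
    (∑ i ∈ univ.filter (fun i => xh i = 1), (1 - x i)) + ∑ i ∈ univ.filter (fun i => xh i = 0), x i
      = hammingDist x xh := by
  rw [sum_filter, sum_filter, ← sum_add_distrib, hammingDist, natCast_card_filter]
  refine sum_congr rfl fun i _ => ?_
  rcases hxh i with h | h <;> rcases hx i with h' | h' <;> norm_num [h, h']

theorem le_of_integer_cut {α : Type*} (Q : α → ℝ) {L θ : ℝ} {xh x : α}
    (hLxh : L ≤ Q xh) (hLx : L ≤ Q x) (hθ : Q x ≤ θ) {k : ℕ} (hk : k = 0 → x = xh) :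
    Q xh - (Q xh - L) * k ≤ θ := by
  rcases k with _ | k
  · simpa [hk rfl] using hθ
  · have : (0 : ℝ) ≤ (Q xh - L) * k := mul_nonneg (sub_nonneg.mpr hLxh) k.cast_nonneg
    push_cast
    linarith

/-- Validity of the integer L-shaped cut (inequality (2)) of Laporte and Louveaux. -/
theorem stmt_12 {n : ℕ} (Q : (Fin n → ℝ) → ℝ) (L : ℝ)
    (hL : ∀ z : Fin n → ℝ, (∀ i, z i = 0 ∨ z i = 1) → Q z ≥ L)
    (xh x : Fin n → ℝ) (hxh : ∀ i, xh i = 0 ∨ xh i = 1) (hx : ∀ i, x i = 0 ∨ x i = 1)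
    (θ : ℝ) (hθ : θ ≥ Q x) :
    θ ≥ Q xh - (Q xh - L) *
      ((∑ i ∈ Finset.univ.filter (fun i => xh i = 1), (1 - x i)) +
        ∑ i ∈ Finset.univ.filter (fun i => xh i = 0), x i) := by
  rw [sum_filter_one_sub_add_sum_filter_eq_hammingDist hxh hx]
  exact le_of_integer_cut Q (hL xh hxh) (hL x hx) hθ hammingDist_eq_zero.mp
end
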